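/- Suppose P̄ satisfies the adjoint forward SLV semidiscretization, P̄_{LV} satisfies the adjoint forward LV semidiscretization P̄_{LV}'(τ) = ½D_{xx}ᵀ L_{LV}²(τ) P̄_{LV}(τ) + (r_d−r_f)D_xᵀ P̄_{LV}(τ) − ½D_xᵀ L_{LV}²(τ) P̄_{LV}(τ), with the same matrices D_x, D_{xx}, initial condition P̄(0) e_v = P̄_{LV}(0), and row-sum conditions D_x e_x = D_{xx} e_x = D_v e_v = D_{vv} e_v = 0. If the diagonal matrix L(τ) satisfies the matching condition L²(τ) P̄(τ) ψ²(Λ) e_v = L_{LV}²(τ) P̄(τ) e_v for all τ, then P̄(τ) e_v = P̄_{LV}(τ) for all τ ≥ 0 (assuming the linear LV ODE has a unique solution, e.g. continuity of coefficients). -/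

import Mathlib

/-!
Multiplying the SLV equation on the right by `e_v` collapses it onto the marginal `P̄ e_v`: every
term ending in `D_v` or `D_vv` is killed since these matrices annihilate `e_v`, and the matching
condition turns each `L² P̄ Ψ²` term into `L_LV² P̄`. Hence `P̄ e_v` solves the LV equation with the
LV initial value, and uniqueness for that linear ODE identifies it with `P̄_LV`.
-/

open Matrix

namespace Matrix

variable {R : Type*} {l m n : Type*} [Fintype m] [Fintype n]

theorem mul_mulVec_eq_zero [NonUnitalSemiring R] (A : Matrix l m R) {B : Matrix m n R} {v : n → R}
    (hB : B *ᵥ v = 0) : (A * B) *ᵥ v = 0 := by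
  rw [← mulVec_mulVec, hB, mulVec_zero]

theorem mul_mul_mul_mulVec_eq_of_mulVec_eq [NonUnitalSemiring R] (A : Matrix l m R)
    {M N : Matrix m m R} {P : Matrix m n R} {Q : Matrix n n R} {v : n → R}
    (h : M *ᵥ ((P * Q) *ᵥ v) = N *ᵥ (P *ᵥ v)) :
    (A * M * P * Q) *ᵥ v = (A * N) *ᵥ (P *ᵥ v) := by
  rw [Matrix.mul_assoc (A * M), ← mulVec_mulVec, ← mulVec_mulVec, h, mulVec_mulVec]

end Matrix

theorem HasDerivAt.matrix_mulVec {𝕜 : Type*} [NontriviallyNormedField 𝕜] {m n : Type*}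
    [Fintype m] [Fintype n] {P P' : 𝕜 → Matrix m n 𝕜} {t : 𝕜}
    (hP : ∀ i j, HasDerivAt (fun τ => P τ i j) (P' t i j) t) (v : n → 𝕜) :
    HasDerivAt (fun τ => P τ *ᵥ v) (P' t *ᵥ v) t := by
  rw [hasDerivAt_pi]
  intro i
  simpa only [mulVec, dotProduct] using
    HasDerivAt.fun_sum fun j _ => (hP i j).mul_const (v j)

section Semidiscretization

variable {R : Type*} [Field R] {m n : Type*} [Fintype m] [Fintype n]

/-- Right-hand side of the semidiscrete forward LV equation, with `S = L_LV²`. -/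
def lvDrift (Dx Dxx S : Matrix m m R) (rd rf : R) (q : m → R) : m → R :=
  (1 / 2 : R) • ((Dxxᵀ * S) *ᵥ q) + (rd - rf) • (Dxᵀ *ᵥ q) - (1 / 2 : R) • ((Dxᵀ * S) *ᵥ q)

theorem slvDrift_mulVec_eq_lvDrift [DecidableEq n]
    (Dx Dxx L S : Matrix m m R) {Dv Dvv : Matrix n n R} {ev : n → R}
    (hDv : Dv *ᵥ ev = 0) (hDvv : Dvv *ᵥ ev = 0) (ρ ξ κ η rd rf : R)
    (Λ Ψ Ψ2 Λα Λ2α : Matrix n n R) (P : Matrix m n R)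
    (hmatch : (L * L) *ᵥ ((P * Ψ2) *ᵥ ev) = S *ᵥ (P *ᵥ ev)) :
    ((1 / 2 : R) • (Dxxᵀ * (L * L) * P * Ψ2)
      + (ρ * ξ) • (Dxᵀ * L * P * (Ψ * Λα * Dv))
      + (ξ ^ 2 / 2) • (P * Λ2α * Dvv)
      + (rd - rf) • (Dxᵀ * P)
      - (1 / 2 : R) • (Dxᵀ * (L * L) * P * Ψ2)
      + κ • (P * (η • (1 : Matrix n n R) - Λ) * Dv)) *ᵥ ev
      = lvDrift Dx Dxx S rd rf (P *ᵥ ev) := by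
  have hΛα : (Dxᵀ * L * P * (Ψ * Λα * Dv)) *ᵥ ev = 0 :=
    mul_mulVec_eq_zero _ (mul_mulVec_eq_zero _ hDv)
  simp only [add_mulVec, sub_mulVec, smul_mulVec, lvDrift, ← mulVec_mulVec _ Dxᵀ P,
    mul_mul_mul_mulVec_eq_of_mulVec_eq _ hmatch, hΛα, mul_mulVec_eq_zero _ hDvv,
    mul_mulVec_eq_zero _ hDv, smul_zero, add_zero]

end Semidiscretization

theorem stmt10_general {m₁ m₂ : ℕ}
    (Dx Dxx : Matrix (Fin m₁) (Fin m₁) ℝ) (Dv Dvv : Matrix (Fin m₂) (Fin m₂) ℝ)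
    (ev : Fin m₂ → ℝ)
    (hDv : Dv *ᵥ ev = 0) (hDvv : Dvv *ᵥ ev = 0)
    (ρ ξ κ η rd rf : ℝ)
    (L LLV : ℝ → Matrix (Fin m₁) (Fin m₁) ℝ)
    (Λ Ψ Ψ2 Λα Λ2α : Matrix (Fin m₂) (Fin m₂) ℝ)
    -- the adjoint forward SLV semidiscretization
    (P : ℝ → Matrix (Fin m₁) (Fin m₂) ℝ)
    (P' : ℝ → Matrix (Fin m₁) (Fin m₂) ℝ)
    (hderiv : ∀ τ, ∀ i j, HasDerivAt (fun τ => P τ i j) (P' τ i j) τ)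
    (hODE : ∀ τ, P' τ =
        (1 / 2 : ℝ) • (Dxxᵀ * (L τ * L τ) * P τ * Ψ2)
      + (ρ * ξ) • (Dxᵀ * L τ * P τ * (Ψ * Λα * Dv))
      + (ξ ^ 2 / 2) • (P τ * Λ2α * Dvv)
      + (rd - rf) • (Dxᵀ * P τ)
      - (1 / 2 : ℝ) • (Dxᵀ * (L τ * L τ) * P τ * Ψ2)
      + κ • (P τ * (η • (1 : Matrix (Fin m₂) (Fin m₂) ℝ) - Λ) * Dv))
    -- the adjoint forward LV semidiscretization
    (PLV : ℝ → (Fin m₁ → ℝ))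
    (hPLV : ∀ τ, HasDerivAt PLV
        ((1 / 2 : ℝ) • ((Dxxᵀ * (LLV τ * LLV τ)) *ᵥ PLV τ)
          + (rd - rf) • (Dxᵀ *ᵥ PLV τ)
          - (1 / 2 : ℝ) • ((Dxᵀ * (LLV τ * LLV τ)) *ᵥ PLV τ)) τ)
    -- same initial condition for the marginals
    (hinit : P 0 *ᵥ ev = PLV 0)
    -- the matching condition for the leverage matrix
    (hmatch : ∀ τ, (L τ * L τ) *ᵥ ((P τ * Ψ2) *ᵥ ev) = (LLV τ * LLV τ) *ᵥ (P τ *ᵥ ev))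
    -- uniqueness of solutions of the linear LV ODE
    (huniq : ∀ Q₁ Q₂ : ℝ → (Fin m₁ → ℝ),
      (∀ τ, HasDerivAt Q₁
          ((1 / 2 : ℝ) • ((Dxxᵀ * (LLV τ * LLV τ)) *ᵥ Q₁ τ)
            + (rd - rf) • (Dxᵀ *ᵥ Q₁ τ)
            - (1 / 2 : ℝ) • ((Dxᵀ * (LLV τ * LLV τ)) *ᵥ Q₁ τ)) τ) →
      (∀ τ, HasDerivAt Q₂
          ((1 / 2 : ℝ) • ((Dxxᵀ * (LLV τ * LLV τ)) *ᵥ Q₂ τ)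
            + (rd - rf) • (Dxᵀ *ᵥ Q₂ τ)
            - (1 / 2 : ℝ) • ((Dxᵀ * (LLV τ * LLV τ)) *ᵥ Q₂ τ)) τ) →
      Q₁ 0 = Q₂ 0 → Q₁ = Q₂) :
    ∀ τ, 0 ≤ τ → P τ *ᵥ ev = PLV τ := by
  have hmarginal : ∀ τ, HasDerivAt (fun t => P t *ᵥ ev)
      (lvDrift Dx Dxx (LLV τ * LLV τ) rd rf (P τ *ᵥ ev)) τ := by
    intro τ
    rw [← slvDrift_mulVec_eq_lvDrift Dx Dxx (L τ) _ hDv hDvv ρ ξ κ η rd rf Λ Ψ Ψ2 Λα Λ2α _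
      (hmatch τ), ← hODE]
    exact HasDerivAt.matrix_mulVec (hderiv τ) ev
  intro τ _
  exact congrFun (huniq _ PLV hmarginal hPLV hinit) τ

/-- main calibration theorem. If the leverage matrix satisfies the
matching condition, then the marginals of the semidiscrete SLV density coincide
with the semidiscrete LV density for all times (assuming uniqueness of solutions
of the linear LV ODE). -/
theorem stmt10 {m₁ m₂ : ℕ}
    (Dx Dxx : Matrix (Fin m₁) (Fin m₁) ℝ) (Dv Dvv : Matrix (Fin m₂) (Fin m₂) ℝ)
    (ex : Fin m₁ → ℝ) (ev : Fin m₂ → ℝ)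
    (hex : ex = fun _ => 1) (hev : ev = fun _ => 1)
    (hDx : Dx *ᵥ ex = 0) (hDxx : Dxx *ᵥ ex = 0)
    (hDv : Dv *ᵥ ev = 0) (hDvv : Dvv *ᵥ ev = 0)
    (ρ ξ κ η rd rf : ℝ)
    (L LLV : ℝ → Matrix (Fin m₁) (Fin m₁) ℝ)
    (Λ Ψ Ψ2 Λα Λ2α : Matrix (Fin m₂) (Fin m₂) ℝ)
    -- the adjoint forward SLV semidiscretization
    (P : ℝ → Matrix (Fin m₁) (Fin m₂) ℝ)
    (P' : ℝ → Matrix (Fin m₁) (Fin m₂) ℝ)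
    (hderiv : ∀ τ, ∀ i j, HasDerivAt (fun τ => P τ i j) (P' τ i j) τ)
    (hODE : ∀ τ, P' τ =
        (1 / 2 : ℝ) • (Dxxᵀ * (L τ * L τ) * P τ * Ψ2)
      + (ρ * ξ) • (Dxᵀ * L τ * P τ * (Ψ * Λα * Dv))
      + (ξ ^ 2 / 2) • (P τ * Λ2α * Dvv)
      + (rd - rf) • (Dxᵀ * P τ)
      - (1 / 2 : ℝ) • (Dxᵀ * (L τ * L τ) * P τ * Ψ2)
      + κ • (P τ * (η • (1 : Matrix (Fin m₂) (Fin m₂) ℝ) - Λ) * Dv))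
    -- the adjoint forward LV semidiscretization
    (PLV : ℝ → (Fin m₁ → ℝ))
    (hPLV : ∀ τ, HasDerivAt PLV
        ((1 / 2 : ℝ) • ((Dxxᵀ * (LLV τ * LLV τ)) *ᵥ PLV τ)
          + (rd - rf) • (Dxᵀ *ᵥ PLV τ)
          - (1 / 2 : ℝ) • ((Dxᵀ * (LLV τ * LLV τ)) *ᵥ PLV τ)) τ)
    -- same initial condition for the marginals
    (hinit : P 0 *ᵥ ev = PLV 0)
    -- the matching condition for the leverage matrix
    (hmatch : ∀ τ, (L τ * L τ) *ᵥ ((P τ * Ψ2) *ᵥ ev) = (LLV τ * LLV τ) *ᵥ (P τ *ᵥ ev))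
    -- uniqueness of solutions of the linear LV ODE
    (huniq : ∀ Q₁ Q₂ : ℝ → (Fin m₁ → ℝ),
      (∀ τ, HasDerivAt Q₁
          ((1 / 2 : ℝ) • ((Dxxᵀ * (LLV τ * LLV τ)) *ᵥ Q₁ τ)
            + (rd - rf) • (Dxᵀ *ᵥ Q₁ τ)
            - (1 / 2 : ℝ) • ((Dxᵀ * (LLV τ * LLV τ)) *ᵥ Q₁ τ)) τ) →
      (∀ τ, HasDerivAt Q₂
          ((1 / 2 : ℝ) • ((Dxxᵀ * (LLV τ * LLV τ)) *ᵥ Q₂ τ)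
            + (rd - rf) • (Dxᵀ *ᵥ Q₂ τ)
            - (1 / 2 : ℝ) • ((Dxᵀ * (LLV τ * LLV τ)) *ᵥ Q₂ τ)) τ) →
      Q₁ 0 = Q₂ 0 → Q₁ = Q₂) :
    ∀ τ, 0 ≤ τ → P τ *ᵥ ev = PLV τ :=
  stmt10_general Dx Dxx Dv Dvv ev hDv hDvv ρ ξ κ η rd rf L LLV Λ Ψ Ψ2 Λα Λ2α P P' hderiv hODE PLV
    hPLV hinit hmatch huniq
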